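/- Let d ≥ 2 and let f = (f_{i,j})_{(i,j)∈couples(d)} be a tuple of elements of ℒ∨(𝕀) that is closed. Then its interior, defined by interior(f)_{i,j} := ⨅ over all subdivisions i = ℓ₀ < ℓ₁ < … < ℓ_k = j (with all ℓ_m ∈ {1,…,d}) of f_{ℓ₀,ℓ₁} ⊕ f_{ℓ₁,ℓ₂} ⊕ … ⊕ f_{ℓ_{k-1},ℓ_k}, is again closed (and it is the greatest open tuple below f). -/
import Mathlib


noncomputable section

instance : Fact ((0:ℝ) ≤ 1) := ⟨zero_le_one⟩

/-- `𝕀` is the real unit interval `[0,1]`, a complete lattice. -/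
notation "𝕀" => unitInterval

/-- `f^∧(x) = ⨅_{x < x'} f x'`, the meet-continuous closure data of `f`. -/
def mCl (f : 𝕀 → 𝕀) : 𝕀 → 𝕀 :=
  fun x => ⨅ y : {y : 𝕀 // x < y}, f y.1

/-- `f^∨(x) = ⨆_{x' < x} f x'`, the join-continuous closure data of `f`. -/
def jCl (f : 𝕀 → 𝕀) : 𝕀 → 𝕀 :=
  fun x => ⨆ y : {y : 𝕀 // y.1 < x}, f y.1

/-- `f` is join-continuous: it preserves all suprema. -/
def JoinCont (f : 𝕀 → 𝕀) : Prop :=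
  ∀ S : Set 𝕀, f (sSup S) = ⨆ x ∈ S, f x

/-- `f` is meet-continuous: it preserves all infima. -/
def MeetCont (f : 𝕀 → 𝕀) : Prop :=
  ∀ S : Set 𝕀, f (sInf S) = ⨅ x ∈ S, f x

/-- The right adjoint `f^ρ` of a join-continuous `f`. -/
def radj (f : 𝕀 → 𝕀) : 𝕀 → 𝕀 := fun y => sSup {x | f x ≤ y}

/-- The left adjoint `g^λ` of a meet-continuous `g`. -/
def ladj (g : 𝕀 → 𝕀) : 𝕀 → 𝕀 := fun y => sInf {x | y ≤ g x}

/-- `f* := (f^ρ)^∨`. -/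
def starF (f : 𝕀 → 𝕀) : 𝕀 → 𝕀 := jCl (radj f)

/-- `f ⊗ g := g ∘ f`. -/
def otimes (f g : 𝕀 → 𝕀) : 𝕀 → 𝕀 := g ∘ f

/-- `f ⊕ g := (g^∧ ∘ f^∧)^∨`. -/
def oplus (f g : 𝕀 → 𝕀) : 𝕀 → 𝕀 := jCl (mCl g ∘ mCl f)

/-- A tuple is closed if `f_{i,j} ⊗ f_{j,k} ≤ f_{i,k}` for `i < j < k`. -/
def ClosedT (d : ℕ) (f : Fin d → Fin d → (𝕀 → 𝕀)) : Prop :=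
  ∀ i j k : Fin d, i < j → j < k → ∀ x, otimes (f i j) (f j k) x ≤ f i k x

/-- A tuple is open if `f_{i,k} ≤ f_{i,j} ⊕ f_{j,k}` for `i < j < k`. -/
def OpenT (d : ℕ) (f : Fin d → Fin d → (𝕀 → 𝕀)) : Prop :=
  ∀ i j k : Fin d, i < j → j < k → ∀ x, f i k x ≤ oplus (f i j) (f j k) x

/-- Pointwise order on the meaningful (`i < j`) entries of tuples. -/
def TLE (d : ℕ) (f g : Fin d → Fin d → (𝕀 → 𝕀)) : Prop :=
  ∀ i j : Fin d, i < j → ∀ x, f i j x ≤ g i j x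

/-- Each meaningful entry of the tuple is join-continuous. -/
def TupleJC (d : ℕ) (f : Fin d → Fin d → (𝕀 → 𝕀)) : Prop :=
  ∀ i j : Fin d, i < j → JoinCont (f i j)

/-- `⊕`-value of a subdivision `ℓ₀ < ℓ₁ < … < ℓ_k`:
`f_{ℓ₀,ℓ₁} ⊕ f_{ℓ₁,ℓ₂} ⊕ … ⊕ f_{ℓ_{k-1},ℓ_k}`. -/
def oplusChain {d : ℕ} (f : Fin d → Fin d → (𝕀 → 𝕀)) : List (Fin d) → (𝕀 → 𝕀)
  | [] => id
  | [_] => id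
  | a :: b :: l => oplus (f a b) (oplusChain f (b :: l))

/-- Subdivisions of the interval `[i,j]`: strictly increasing lists from `i` to `j`. -/
def Subdiv (d : ℕ) (i j : Fin d) : Set (List (Fin d)) :=
  {L | L.Chain' (· < ·) ∧ L.head? = some i ∧ L.getLast? = some j}

/-- The interior of a tuple: `interior(f)_{i,j}` is the infimum, over all subdivisions
`i = ℓ₀ < ℓ₁ < … < ℓ_k = j`, of `f_{ℓ₀,ℓ₁} ⊕ … ⊕ f_{ℓ_{k-1},ℓ_k}`. -/
def interiorT (d : ℕ) (f : Fin d → Fin d → (𝕀 → 𝕀)) : Fin d → Fin d → (𝕀 → 𝕀) :=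
  fun i j => ⨅ L : Subdiv d i j, oplusChain f L.1

/-- The chain `C_f ⊆ 𝕀²` associated to a monotone `f : 𝕀 → 𝕀`. -/
def Cf2 (f : 𝕀 → 𝕀) : Set (𝕀 × 𝕀) :=
  {p | jCl f p.1 ≤ p.2 ∧ p.2 ≤ mCl f p.1}

/-- `f_C^-(x) = ⨅ {y | (x,y) ∈ C}`. -/
def fCm (C : Set (𝕀 × 𝕀)) : 𝕀 → 𝕀 := fun x => sInf {y | (x, y) ∈ C}

/-- `f_C^+(x) = ⨆ {y | (x,y) ∈ C}`. -/
def fCp (C : Set (𝕀 × 𝕀)) : 𝕀 → 𝕀 := fun x => sSup {y | (x, y) ∈ C}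

/-- Compatibility of a (fully extended) tuple: `f_{j,k} ∘ f_{i,j} ≤ f_{i,k}` for all `i,j,k`. -/
def Compatible (d : ℕ) (f : Fin d → Fin d → (𝕀 → 𝕀)) : Prop :=
  ∀ i j k : Fin d, ∀ x, f j k (f i j x) ≤ f i k x

/-- The subset `C_f ⊆ 𝕀^d` associated to a compatible tuple. -/
def Cfd (d : ℕ) (f : Fin d → Fin d → (𝕀 → 𝕀)) : Set (Fin d → 𝕀) :=
  {x | ∀ i j : Fin d, f i j (x i) ≤ x j}

/-- `v(C)_{i,j}(x) = ⨅ {c_j | c ∈ C, c_i = x}`. -/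
def vC (d : ℕ) (C : Set (Fin d → 𝕀)) (i j : Fin d) : 𝕀 → 𝕀 :=
  fun x => sInf {z | ∃ c ∈ C, c i = x ∧ c j = z}

/-- Canonical extension of a tuple given on `i < j` to all pairs:
identity on the diagonal and `f_{j,i} := (f_{i,j})*` below it. -/
def extT (d : ℕ) (g : Fin d → Fin d → (𝕀 → 𝕀)) : Fin d → Fin d → (𝕀 → 𝕀) :=
  fun i j => if i < j then g i j else if j < i then starF (g j i) else id

/-- The one-step function `h_{x,y}`. -/
def oneStep (x y : 𝕀) : 𝕀 → 𝕀 := fun t => if t ≤ x then 0 else y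


section Basic

variable {f g h u v : 𝕀 → 𝕀}

lemma le_of_forall_lt_le {a b : 𝕀} (h : ∀ c, c < a → c ≤ b) : a ≤ b := by
  by_contra hc
  push_neg at hc
  obtain ⟨c, h1, h2⟩ := exists_between hc
  exact absurd (h c h2) (not_le.mpr h1)

lemma mono_mCl (f : 𝕀 → 𝕀) : Monotone (mCl f) := by
  intro a b hab
  exact le_iInf fun y => iInf_le (fun z : {z : 𝕀 // a < z} => f z.1) ⟨y.1, lt_of_le_of_lt hab y.2⟩

lemma mono_jCl (f : 𝕀 → 𝕀) : Monotone (jCl f) := by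
  intro a b hab
  exact iSup_le fun y => le_iSup (fun z : {z : 𝕀 // z.1 < b.1} => f z.1)
    ⟨y.1, lt_of_lt_of_le y.2 hab⟩

lemma mCl_le_mCl (hle : ∀ x, u x ≤ v x) : ∀ x, mCl u x ≤ mCl v x := fun x =>
  le_iInf fun y => (iInf_le (fun z : {z : 𝕀 // x < z} => u z.1) y).trans (hle y.1)

lemma jCl_le_jCl (hle : ∀ x, u x ≤ v x) : ∀ x, jCl u x ≤ jCl v x := fun x =>
  iSup_le fun y => (hle y.1).trans (le_iSup (fun z : {z : 𝕀 // z.1 < x.1} => v z.1) y)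

lemma jc_monotone (hf : JoinCont f) : Monotone f := by
  intro a b hab
  have h := hf {a, b}
  rw [sSup_pair, sup_eq_right.mpr hab] at h
  rw [h, iSup_pair]
  exact le_sup_left

lemma jc_bot (hf : JoinCont f) : f ⊥ = ⊥ := by
  have := hf ∅
  simpa using this

lemma jc_id : JoinCont (id : 𝕀 → 𝕀) := by
  intro S
  simpa using sSup_eq_iSup

lemma jc_comp (hf : JoinCont f) (hg : JoinCont g) : JoinCont (g ∘ f) := by
  intro S
  show g (f (sSup S)) = _
  rw [hf S, ← sSup_image, hg, iSup_image]
  simp [Function.comp]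

lemma le_mCl (hf : Monotone f) : ∀ x, f x ≤ mCl f x := fun x =>
  le_iInf fun y => hf y.2.le

lemma jCl_le (hf : Monotone f) : ∀ x, jCl f x ≤ f x := fun x =>
  iSup_le fun y => hf (Subtype.coe_lt_coe.mp y.2).le

lemma sSup_Iio_eq {x : 𝕀} (hx : x ≠ ⊥) : sSup (Set.Iio x) = x := by
  apply le_antisymm (sSup_le fun y hy => hy.le)
  by_contra hc
  push_neg at hc
  have hb : ⊥ < x := bot_lt_iff_ne_bot.mpr hx
  obtain ⟨z, h1, h2⟩ := exists_between hc
  exact absurd (le_sSup (show z ∈ Set.Iio x from h2)) (not_le.mpr h1)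

lemma jCl_eq_of_jc (hf : JoinCont f) : ∀ x, jCl f x = f x := by
  intro x
  rcases eq_or_ne x ⊥ with rfl | hx
  · haveI : IsEmpty {y : 𝕀 // y.1 < ((⊥ : 𝕀) : ℝ)} :=
      ⟨fun y => not_lt_bot (show (y.1 : 𝕀) < ⊥ from Subtype.coe_lt_coe.mp y.2)⟩
    rw [jc_bot hf]
    exact le_antisymm (by simpa [jCl] using iSup_of_empty _) bot_le
  · apply le_antisymm
    · apply iSup_le fun y => ?_
      have hy : (y.1 : 𝕀) < x := Subtype.coe_lt_coe.mp y.2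
      calc f y.1 ≤ ⨆ z ∈ Set.Iio x, f z := le_biSup _ hy
        _ = f (sSup (Set.Iio x)) := (hf _).symm
        _ = f x := by rw [sSup_Iio_eq hx]
    · conv_lhs => rw [← sSup_Iio_eq hx, hf]
      exact iSup₂_le fun z hz =>
        le_iSup (fun y : {y : 𝕀 // y.1 < x.1} => f y.1) ⟨z, Subtype.coe_lt_coe.mpr hz⟩

lemma jc_jCl (u : 𝕀 → 𝕀) : JoinCont (jCl u) := by
  intro S
  apply le_antisymm
  · apply iSup_le fun y => ?_
    have hy : (y.1 : 𝕀) < sSup S := Subtype.coe_lt_coe.mp y.2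
    obtain ⟨s, hs, hys⟩ := lt_sSup_iff.mp hy
    calc u y.1 ≤ jCl u s := le_iSup (fun z : {z : 𝕀 // z.1 < s.1} => u z.1)
          ⟨y.1, Subtype.coe_lt_coe.mpr hys⟩
      _ ≤ ⨆ x ∈ S, jCl u x := le_biSup _ hs
  · exact iSup₂_le fun s hs => iSup_le fun y =>
      le_iSup (fun z : {z : 𝕀 // z.1 < (sSup S).1} => u z.1)
        ⟨y.1, Subtype.coe_lt_coe.mpr (lt_of_lt_of_le (Subtype.coe_lt_coe.mp y.2) (le_sSup hs))⟩

lemma mCl_id : mCl (id : 𝕀 → 𝕀) = id := by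
  funext x
  apply le_antisymm
  · by_contra hc
    push_neg at hc
    obtain ⟨y, h1, h2⟩ := exists_between hc
    exact absurd (iInf_le (fun y : {y : 𝕀 // x < y} => (y.1 : 𝕀)) ⟨y, h1⟩) (not_le.mpr h2)
  · exact le_iInf fun y => y.2.le

lemma mCl_iInf_arg {ι : Sort*} (g : 𝕀 → 𝕀) (t : ι → 𝕀) :
    mCl g (⨅ α, t α) = ⨅ α, mCl g (t α) := by
  apply le_antisymm
  · exact le_iInf fun α => le_iInf fun y =>
      iInf_le (fun z : {z : 𝕀 // (⨅ α, t α) < z} => g z.1)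
        ⟨y.1, lt_of_le_of_lt (iInf_le t α) y.2⟩
  · apply le_iInf fun y => ?_
    obtain ⟨α, hα⟩ := iInf_lt_iff.mp y.2
    calc ⨅ α, mCl g (t α) ≤ mCl g (t α) := iInf_le _ α
      _ ≤ g y.1 := iInf_le (fun z : {z : 𝕀 // t α < z} => g z.1) ⟨y.1, hα⟩

lemma mCl_mCl (f : 𝕀 → 𝕀) : mCl (mCl f) = mCl f := by
  funext x
  apply le_antisymm
  · apply le_iInf fun z => ?_
    obtain ⟨y, h1, h2⟩ := exists_between z.2
    calc mCl (mCl f) x ≤ mCl f y := iInf_le (fun w : {w : 𝕀 // x < w} => mCl f w.1) ⟨y, h1⟩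
      _ ≤ f z.1 := iInf_le (fun w : {w : 𝕀 // y < w} => f w.1) ⟨z.1, h2⟩
  · exact le_iInf fun y => mono_mCl f y.2.le

lemma mCl_jCl (hu : Monotone u) : mCl (jCl u) = mCl u := by
  funext x
  apply le_antisymm
  · exact le_iInf fun y =>
      (iInf_le (fun w : {w : 𝕀 // x < w} => jCl u w.1) y).trans (jCl_le hu y.1)
  · apply le_iInf fun y => ?_
    obtain ⟨z, h1, h2⟩ := exists_between y.2
    calc mCl u x ≤ u z := iInf_le (fun w : {w : 𝕀 // x < w} => u w.1) ⟨z, h1⟩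
      _ ≤ jCl u y.1 := le_iSup (fun w : {w : 𝕀 // w.1 < (y.1 : 𝕀).1} => u w.1)
          ⟨z, Subtype.coe_lt_coe.mpr h2⟩

lemma mCl_comp_mCl (g f : 𝕀 → 𝕀) : mCl (mCl g ∘ mCl f) = mCl g ∘ mCl f := by
  funext x
  calc mCl (mCl g ∘ mCl f) x = ⨅ y : {y : 𝕀 // x < y}, mCl g (mCl f y.1) := rfl
    _ = mCl g (⨅ y : {y : 𝕀 // x < y}, mCl f y.1) := (mCl_iInf_arg _ _).symm
    _ = mCl g (mCl (mCl f) x) := rfl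
    _ = mCl g (mCl f x) := by rw [mCl_mCl]

lemma oplus_assoc (a b c : 𝕀 → 𝕀) : oplus (oplus a b) c = oplus a (oplus b c) := by
  show jCl (mCl c ∘ mCl (jCl (mCl b ∘ mCl a))) = jCl (mCl (jCl (mCl c ∘ mCl b)) ∘ mCl a)
  rw [mCl_jCl ((mono_mCl b).comp (mono_mCl a)), mCl_jCl ((mono_mCl c).comp (mono_mCl b)),
    mCl_comp_mCl, mCl_comp_mCl]
  rfl

lemma oplus_mono {a a' b b' : 𝕀 → 𝕀} (h1 : ∀ x, a x ≤ a' x) (h2 : ∀ x, b x ≤ b' x) :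
    ∀ x, oplus a b x ≤ oplus a' b' x := by
  apply jCl_le_jCl
  intro t
  exact (mono_mCl b (mCl_le_mCl h1 t)).trans (mCl_le_mCl h2 _)

lemma jCl_mCl_of_jc (hg : JoinCont g) : ∀ x, jCl (mCl g) x = g x := by
  intro x
  apply le_antisymm
  · exact iSup_le fun z =>
      iInf_le (fun w : {w : 𝕀 // (z.1 : 𝕀) < w} => g w.1) ⟨x, Subtype.coe_lt_coe.mp z.2⟩
  · calc g x = jCl g x := (jCl_eq_of_jc hg x).symm
      _ ≤ jCl (mCl g) x := jCl_le_jCl (le_mCl (jc_monotone hg)) x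

lemma oplus_id_right (hf : JoinCont f) : oplus f id = f := by
  funext x
  show jCl (mCl id ∘ mCl f) x = f x
  rw [mCl_id, Function.id_comp]
  exact jCl_mCl_of_jc hf x

lemma oplus_id_left (hf : JoinCont f) : oplus id f = f := by
  funext x
  show jCl (mCl f ∘ mCl id) x = f x
  rw [mCl_id, Function.comp_id]
  exact jCl_mCl_of_jc hf x

end Basic

section Swap

variable {f g h : 𝕀 → 𝕀}

lemma jCl_iInf_le {ι : Type} [Finite ι] [Nonempty ι] (u : ι → 𝕀 → 𝕀)
    (hu : ∀ α, Monotone (u α)) (x : 𝕀) :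
    (⨅ α, jCl (u α) x) ≤ jCl (fun t => ⨅ α, u α t) x := by
  apply le_of_forall_lt_le
  intro c hc
  have hz : ∀ α, ∃ z : {z : 𝕀 // z.1 < x.1}, c < u α z.1 := fun α =>
    lt_iSup_iff.mp (lt_of_lt_of_le hc (iInf_le _ α))
  choose z hzc using hz
  obtain ⟨α0, hα0⟩ := Finite.exists_max (fun α => ((z α).1 : 𝕀))
  calc c ≤ ⨅ α, u α (z α0).1 := le_iInf fun α => (hzc α).le.trans (hu α (hα0 α))
    _ ≤ jCl (fun t => ⨅ α, u α t) x :=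
        le_iSup (fun w : {w : 𝕀 // w.1 < x.1} => ⨅ α, u α w.1) (z α0)

lemma mCl_iInf_fun {ι : Type} (g : ι → 𝕀 → 𝕀) (x : 𝕀) :
    mCl (fun t => ⨅ α, g α t) x = ⨅ α, mCl (g α) x := by
  show ⨅ y : {y : 𝕀 // x < y}, ⨅ α, g α y.1 = ⨅ α, ⨅ y : {y : 𝕀 // x < y}, g α y.1
  exact iInf_comm

lemma oplus_iInf_right {ι : Type} [Finite ι] [Nonempty ι] (f : 𝕀 → 𝕀) (g : ι → 𝕀 → 𝕀)
    (x : 𝕀) :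
    (⨅ α, oplus f (g α) x) ≤ oplus f (fun t => ⨅ α, g α t) x := by
  have he : ∀ t, (mCl (fun s => ⨅ α, g α s) ∘ mCl f) t = ⨅ α, (mCl (g α) ∘ mCl f) t :=
    fun t => mCl_iInf_fun g (mCl f t)
  have : oplus f (fun t => ⨅ α, g α t) x
      = jCl (fun t => ⨅ α, (mCl (g α) ∘ mCl f) t) x := by
    show jCl _ x = _
    rw [funext he]
  rw [this]
  exact jCl_iInf_le (fun α => mCl (g α) ∘ mCl f)
    (fun α => (mono_mCl (g α)).comp (mono_mCl f)) x

lemma oplus_iInf_left {ι : Type} [Finite ι] [Nonempty ι] (f : 𝕀 → 𝕀) (g : ι → 𝕀 → 𝕀)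
    (x : 𝕀) :
    (⨅ α, oplus (g α) f x) ≤ oplus (fun t => ⨅ α, g α t) f x := by
  have he : ∀ t, (mCl f ∘ mCl (fun s => ⨅ α, g α s)) t = ⨅ α, (mCl f ∘ mCl (g α)) t := by
    intro t
    show mCl f (mCl (fun s => ⨅ α, g α s) t) = _
    rw [mCl_iInf_fun g t, mCl_iInf_arg]
    rfl
  have : oplus (fun t => ⨅ α, g α t) f x
      = jCl (fun t => ⨅ α, (mCl f ∘ mCl (g α)) t) x := by
    show jCl _ x = _
    rw [funext he]
  rw [this]
  exact jCl_iInf_le (fun α => mCl f ∘ mCl (g α))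
    (fun α => (mono_mCl f).comp (mono_mCl (g α))) x

lemma otimes_le_oplus (hf : JoinCont f) (hg : JoinCont g) :
    ∀ x, otimes f g x ≤ oplus f g x := by
  intro x
  calc otimes f g x = jCl (g ∘ f) x := (jCl_eq_of_jc (jc_comp hf hg) x).symm
    _ ≤ jCl (mCl g ∘ mCl f) x := jCl_le_jCl (fun t =>
        ((jc_monotone hg (le_mCl (jc_monotone hf) t)).trans
          (le_mCl (jc_monotone hg) (mCl f t)))) x

lemma delta1 (hf : JoinCont f) (hg : Monotone g) (h : 𝕀 → 𝕀) :
    ∀ x, otimes f (oplus g h) x ≤ oplus (otimes f g) h x := by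
  intro x
  show jCl (mCl h ∘ mCl g) (f x) ≤ jCl (mCl h ∘ mCl (g ∘ f)) x
  apply iSup_le fun z => ?_
  have hz : (z.1 : 𝕀) < f x := Subtype.coe_lt_coe.mp z.2
  have hz' : (z.1 : 𝕀) < jCl f x := by rw [jCl_eq_of_jc hf x]; exact hz
  obtain ⟨w, hw⟩ := lt_iSup_iff.mp hz'
  have key : mCl g z.1 ≤ mCl (g ∘ f) w.1 := by
    apply le_iInf fun w' => ?_
    exact iInf_le (fun y : {y : 𝕀 // (z.1 : 𝕀) < y} => g y.1)
      ⟨f w'.1, lt_of_lt_of_le hw (jc_monotone hf w'.2.le)⟩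
  calc mCl h (mCl g z.1) ≤ mCl h (mCl (g ∘ f) w.1) := mono_mCl h key
    _ ≤ jCl (mCl h ∘ mCl (g ∘ f)) x :=
        le_iSup (fun y : {y : 𝕀 // y.1 < x.1} => mCl h (mCl (g ∘ f) y.1)) w

lemma delta2 (hc : JoinCont h) (a b : 𝕀 → 𝕀) :
    ∀ x, otimes (oplus a b) h x ≤ oplus a (otimes b h) x := by
  intro x
  show h (jCl (mCl b ∘ mCl a) x) ≤ jCl (mCl (h ∘ b) ∘ mCl a) x
  have h1 : h (jCl (mCl b ∘ mCl a) x)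
      = ⨆ z : {z : 𝕀 // z.1 < x.1}, h (mCl b (mCl a z.1)) := by
    show h (⨆ z : {z : 𝕀 // z.1 < x.1}, mCl b (mCl a z.1)) = _
    rw [← sSup_range, hc, iSup_range]
  rw [h1]
  apply iSup_le fun z => ?_
  have key : h (mCl b (mCl a z.1)) ≤ mCl (h ∘ b) (mCl a z.1) := by
    apply le_iInf fun t' => ?_
    exact jc_monotone hc (iInf_le (fun y : {y : 𝕀 // mCl a z.1 < y} => b y.1) t')
  exact key.trans (le_iSup (fun y : {y : 𝕀 // y.1 < x.1} => mCl (h ∘ b) (mCl a y.1)) z)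

end Swap

section Chains

variable {d : ℕ} {f : Fin d → Fin d → (𝕀 → 𝕀)}

lemma oplusChain_cons (a b : Fin d) (l : List (Fin d)) :
    oplusChain f (a :: b :: l) = oplus (f a b) (oplusChain f (b :: l)) := rfl

lemma jc_oplusChain (f : Fin d → Fin d → (𝕀 → 𝕀)) :
    ∀ L : List (Fin d), JoinCont (oplusChain f L)
  | [] => jc_id
  | [_] => jc_id
  | _ :: _ :: _ => jc_jCl _

lemma mono_oplusChain (f : Fin d → Fin d → (𝕀 → 𝕀)) (L : List (Fin d)) :
    Monotone (oplusChain f L) := jc_monotone (jc_oplusChain f L)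

lemma mem_subdiv_iff {L : List (Fin d)} {i j : Fin d} :
    L ∈ Subdiv d i j ↔ L.Chain' (· < ·) ∧ L.head? = some i ∧ L.getLast? = some j :=
  Iff.rfl

lemma subdiv_pair {i j : Fin d} (hij : i < j) : [i, j] ∈ Subdiv d i j := by
  refine ⟨List.isChain_pair.mpr hij, rfl, rfl⟩

lemma subdiv_finite (i j : Fin d) : (Subdiv d i j).Finite := by
  apply Set.Finite.subset (List.finite_length_le (Fin d) d)
  intro L hL
  have hnd : L.Nodup := (List.isChain_iff_pairwise.mp hL.1).imp ne_of_lt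
  simpa using List.Nodup.length_le_card hnd

instance subdiv_fin (i j : Fin d) : Finite ↥(Subdiv d i j) :=
  (subdiv_finite i j).to_subtype

lemma subdiv_nonempty {i j : Fin d} (hij : i < j) : Nonempty ↥(Subdiv d i j) :=
  ⟨⟨[i, j], subdiv_pair hij⟩⟩

lemma subdiv_shape {L : List (Fin d)} {i j : Fin d} (h : L ∈ Subdiv d i j) :
    ∃ M, L = i :: M := by
  obtain ⟨hc, hh, hl⟩ := h
  cases L with
  | nil => simp at hh
  | cons a M =>
    simp only [List.head?_cons, Option.some.injEq] at hh
    exact ⟨M, by rw [hh]⟩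

lemma subdiv_tail {M : List (Fin d)} {i b k : Fin d} (h : (i :: b :: M) ∈ Subdiv d i k) :
    i < b ∧ (b :: M) ∈ Subdiv d b k := by
  obtain ⟨hc, hh, hl⟩ := h
  obtain ⟨h1, h2⟩ := List.isChain_cons_cons.mp hc
  exact ⟨h1, ⟨h2, rfl, by rwa [List.getLast?_cons_cons] at hl⟩⟩

lemma subdiv_cons {M : List (Fin d)} {i b k : Fin d} (hib : i < b)
    (h : (b :: M) ∈ Subdiv d b k) : (i :: b :: M) ∈ Subdiv d i k := by
  obtain ⟨hc, hh, hl⟩ := h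
  exact ⟨List.isChain_cons_cons.mpr ⟨hib, hc⟩, rfl, by rwa [List.getLast?_cons_cons]⟩

lemma subdiv_single {a i j : Fin d} (h : [a] ∈ Subdiv d i j) : i = j := by
  obtain ⟨_, hh, hl⟩ := h
  simp at hh hl
  rw [← hh, ← hl]

lemma subdiv_head_lt :
    ∀ (M : List (Fin d)) (a z : Fin d), (a :: M) ∈ Subdiv d a z → M ≠ [] → a < z := by
  intro M
  induction M with
  | nil => intro a z _ hne; exact absurd rfl hne
  | cons b M' ih =>
    intro a z h _
    obtain ⟨hab, h2⟩ := subdiv_tail h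
    cases M' with
    | nil => rwa [subdiv_single h2] at hab
    | cons c M'' => exact hab.trans (ih b z h2 (by simp))

lemma subdiv_append {L1 M2 : List (Fin d)} {i j k : Fin d} (hjk : j < k)
    (h1 : L1 ∈ Subdiv d i j) (h2 : (j :: M2) ∈ Subdiv d j k) :
    (L1 ++ M2) ∈ Subdiv d i k := by
  have hM2 : M2 ≠ [] := by
    intro he
    subst he
    exact absurd (subdiv_single h2) (ne_of_lt hjk)
  obtain ⟨M1, rfl⟩ := subdiv_shape h1
  obtain ⟨hc1, hh1, hl1⟩ := h1
  obtain ⟨hc2, hh2, hl2⟩ := h2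
  refine ⟨?_, ?_, ?_⟩
  · apply List.IsChain.append hc1 (List.isChain_cons.mp hc2).2
    intro x hx y hy
    rw [hl1] at hx
    simp at hx
    subst hx
    cases M2 with
    | nil => exact absurd rfl hM2
    | cons m M2' =>
      simp at hy
      subst hy
      exact (List.isChain_cons_cons.mp hc2).1
  · rfl
  · rw [List.getLast?_append_of_ne_nil _ hM2]
    cases M2 with
    | nil => exact absurd rfl hM2
    | cons m M2' => rwa [List.getLast?_cons_cons] at hl2

lemma chain_append_le {M2 : List (Fin d)} {j k : Fin d}
    (h2 : (j :: M2) ∈ Subdiv d j k) :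
    ∀ (M1 : List (Fin d)) (a : Fin d), (a :: M1) ∈ Subdiv d a j →
      ∀ x, oplusChain f ((a :: M1) ++ M2) x
        ≤ oplus (oplusChain f (a :: M1)) (oplusChain f (j :: M2)) x := by
  intro M1
  induction M1 with
  | nil =>
    intro a h1 x
    have haj : a = j := subdiv_single h1
    subst haj
    show oplusChain f (a :: M2) x ≤ oplus id (oplusChain f (a :: M2)) x
    rw [oplus_id_left (jc_oplusChain f _)]
  | cons b M1' ih =>
    intro a h1 x
    obtain ⟨hab, h1'⟩ := subdiv_tail h1
    show oplusChain f (a :: b :: (M1' ++ M2)) x ≤ _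
    rw [oplusChain_cons, oplusChain_cons, oplus_assoc]
    exact oplus_mono (fun t => le_refl _) (ih b h1') x

end Chains

section Interior

variable {d : ℕ} {f : Fin d → Fin d → (𝕀 → 𝕀)}

lemma interiorT_apply (i j : Fin d) (x : 𝕀) :
    interiorT d f i j x = ⨅ L : ↥(Subdiv d i j), oplusChain f L.1 x := by
  rw [interiorT]
  exact iInf_apply

lemma interior_le_chain {L : List (Fin d)} {i j : Fin d} (hL : L ∈ Subdiv d i j) (x : 𝕀) :
    interiorT d f i j x ≤ oplusChain f L x := by
  rw [interiorT_apply]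
  exact iInf_le (fun L : ↥(Subdiv d i j) => oplusChain f L.1 x) ⟨L, hL⟩

lemma oplusChain_pair {i j : Fin d} (h : JoinCont (f i j)) :
    oplusChain f [i, j] = f i j := by
  show oplus (f i j) id = f i j
  exact oplus_id_right h

lemma interior_le_f (hjc : TupleJC d f) {i j : Fin d} (hij : i < j) (x : 𝕀) :
    interiorT d f i j x ≤ f i j x := by
  have h := interior_le_chain (f := f) (subdiv_pair hij) x
  rwa [oplusChain_pair (hjc i j hij)] at h

lemma mono_interior (i j : Fin d) : Monotone (interiorT d f i j) := by
  intro a b hab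
  rw [interiorT_apply, interiorT_apply]
  exact le_iInf fun L => (iInf_le _ L).trans (mono_oplusChain f L.1 hab)

lemma key_closed (hjc : TupleJC d f) (hcl : ClosedT d f) {j k : Fin d} (hjk : j < k) :
    ∀ (M : List (Fin d)) (i : Fin d), i < j → (i :: M) ∈ Subdiv d i k →
      ∀ x, interiorT d f j k (interiorT d f i j x) ≤ oplusChain f (i :: M) x := by
  intro M
  induction M with
  | nil =>
    intro i hij h x
    have hik : i = k := subdiv_single h
    subst hik
    exact absurd (hij.trans hjk) (lt_irrefl i)
  | cons ℓ M' ih =>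
    intro i hij h x
    obtain ⟨hiℓ, hℓ⟩ := subdiv_tail h
    rw [oplusChain_cons]
    rcases lt_trichotomy ℓ j with hℓj | rfl | hjℓ
    · -- ℓ < j : go through interiorT ℓ j
      haveI := subdiv_nonempty (d := d) hℓj
      haveI := subdiv_nonempty (d := d) hjk
      have hIlj : (fun t => ⨅ L' : ↥(Subdiv d ℓ j), oplusChain f L'.1 t)
          = interiorT d f ℓ j := by
        funext t
        exact (interiorT_apply ℓ j t).symm
      have step1 : interiorT d f i j x ≤ oplus (f i ℓ) (interiorT d f ℓ j) x := by
        have h1 : interiorT d f i j x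
            ≤ ⨅ L' : ↥(Subdiv d ℓ j), oplus (f i ℓ) (oplusChain f L'.1) x := by
          apply le_iInf fun L' => ?_
          obtain ⟨M'', hM''⟩ := subdiv_shape L'.2
          have hL' := L'.2
          rw [hM''] at hL'
          have hm : (i :: ℓ :: M'') ∈ Subdiv d i j := subdiv_cons hiℓ hL'
          have h2 := interior_le_chain (f := f) hm x
          rw [oplusChain_cons] at h2
          rw [hM'']
          exact h2
        refine h1.trans ?_
        refine (oplus_iInf_right (f i ℓ)
          (fun L' : ↥(Subdiv d ℓ j) => oplusChain f L'.1) x).trans ?_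
        rw [hIlj]
      have step2 := mono_interior (f := f) j k step1
      have hIjk : (fun t => ⨅ L2 : ↥(Subdiv d j k),
            oplusChain f L2.1 (interiorT d f ℓ j t))
          = fun t => interiorT d f j k (interiorT d f ℓ j t) := by
        funext t
        exact (interiorT_apply j k _).symm
      have step3 : interiorT d f j k (oplus (f i ℓ) (interiorT d f ℓ j) x)
          ≤ oplus (f i ℓ) (fun t => interiorT d f j k (interiorT d f ℓ j t)) x := by
        rw [interiorT_apply]
        have h3 : ∀ L2 : ↥(Subdiv d j k),
            oplusChain f L2.1 (oplus (f i ℓ) (interiorT d f ℓ j) x)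
              ≤ oplus (f i ℓ) (fun t => oplusChain f L2.1 (interiorT d f ℓ j t)) x :=
          fun L2 => delta2 (jc_oplusChain f L2.1) (f i ℓ) (interiorT d f ℓ j) x
        refine (iInf_mono h3).trans ?_
        refine (oplus_iInf_right (f i ℓ)
          (fun L2 : ↥(Subdiv d j k) => fun t => oplusChain f L2.1 (interiorT d f ℓ j t))
          x).trans ?_
        rw [hIjk]
      have step4 : ∀ t, interiorT d f j k (interiorT d f ℓ j t)
          ≤ oplusChain f (ℓ :: M') t := ih ℓ hℓj hℓ
      exact step2.trans (step3.trans (oplus_mono (fun t => le_refl _) step4 x))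
    · -- ℓ = j
      calc interiorT d f ℓ k (interiorT d f i ℓ x)
          ≤ oplusChain f (ℓ :: M') (interiorT d f i ℓ x) := interior_le_chain hℓ _
        _ ≤ oplusChain f (ℓ :: M') (f i ℓ x) :=
            mono_oplusChain f _ (interior_le_f hjc hij x)
        _ ≤ oplus (f i ℓ) (oplusChain f (ℓ :: M')) x :=
            otimes_le_oplus (hjc i ℓ hij) (jc_oplusChain f _) x
    · -- j < ℓ
      have hmem : (j :: ℓ :: M') ∈ Subdiv d j k := subdiv_cons hjℓ hℓ
      calc interiorT d f j k (interiorT d f i j x)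
          ≤ oplusChain f (j :: ℓ :: M') (interiorT d f i j x) := interior_le_chain hmem _
        _ ≤ oplusChain f (j :: ℓ :: M') (f i j x) :=
            mono_oplusChain f _ (interior_le_f hjc hij x)
        _ = otimes (f i j) (oplus (f j ℓ) (oplusChain f (ℓ :: M'))) x := rfl
        _ ≤ oplus (otimes (f i j) (f j ℓ)) (oplusChain f (ℓ :: M')) x :=
            delta1 (hjc i j hij) (jc_monotone (hjc j ℓ hjℓ)) _ x
        _ ≤ oplus (f i ℓ) (oplusChain f (ℓ :: M')) x :=
            oplus_mono (hcl i j ℓ hij hjℓ) (fun t => le_refl _) x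

lemma key_great {g : Fin d → Fin d → (𝕀 → 𝕀)} (hjc : TupleJC d f) (hgo : OpenT d g)
    (hgle : TLE d g f) {j : Fin d} :
    ∀ (M : List (Fin d)) (i : Fin d), i < j → (i :: M) ∈ Subdiv d i j →
      ∀ x, g i j x ≤ oplusChain f (i :: M) x := by
  intro M
  induction M with
  | nil =>
    intro i hij h x
    have hik : i = j := subdiv_single h
    subst hik
    exact absurd hij (lt_irrefl i)
  | cons b M' ih =>
    intro i hij h x
    obtain ⟨hib, hb⟩ := subdiv_tail h
    cases M' with
    | nil =>
      have hbj : b = j := subdiv_single hb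
      subst hbj
      rw [oplusChain_pair (hjc i b hib)]
      exact hgle i b hib x
    | cons c M'' =>
      have hbj : b < j := subdiv_head_lt _ b j hb (by simp)
      rw [oplusChain_cons]
      calc g i j x ≤ oplus (g i b) (g b j) x := hgo i b j hib hbj x
        _ ≤ oplus (f i b) (oplusChain f (b :: c :: M'')) x :=
            oplus_mono (hgle i b hib) (ih b hbj hb) x

lemma open_interior (hjc : TupleJC d f) : OpenT d (interiorT d f) := by
  intro i j k hij hjk x
  haveI := subdiv_nonempty (d := d) hij
  haveI := subdiv_nonempty (d := d) hjk
  have stepA : ∀ (L1 : ↥(Subdiv d i j)) (L2 : ↥(Subdiv d j k)),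
      interiorT d f i k x ≤ oplus (oplusChain f L1.1) (oplusChain f L2.1) x := by
    intro L1 L2
    obtain ⟨M1, hM1⟩ := subdiv_shape L1.2
    obtain ⟨M2, hM2⟩ := subdiv_shape L2.2
    have hL1 := L1.2; rw [hM1] at hL1
    have hL2 := L2.2; rw [hM2] at hL2
    have happ : ((i :: M1) ++ M2) ∈ Subdiv d i k := subdiv_append hjk hL1 hL2
    rw [hM1, hM2]
    exact (interior_le_chain happ x).trans (chain_append_le hL2 M1 i hL1 x)
  have hIjk : (fun t => ⨅ L2 : ↥(Subdiv d j k), oplusChain f L2.1 t)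
      = interiorT d f j k := by
    funext t
    exact (interiorT_apply j k t).symm
  have hIij : (fun t => ⨅ L1 : ↥(Subdiv d i j), oplusChain f L1.1 t)
      = interiorT d f i j := by
    funext t
    exact (interiorT_apply i j t).symm
  have stepB : ∀ L1 : ↥(Subdiv d i j),
      interiorT d f i k x ≤ oplus (oplusChain f L1.1) (interiorT d f j k) x := by
    intro L1
    refine (le_iInf fun L2 => stepA L1 L2).trans ?_
    refine (oplus_iInf_right (oplusChain f L1.1)
      (fun L2 : ↥(Subdiv d j k) => oplusChain f L2.1) x).trans ?_
    rw [hIjk]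
  refine (le_iInf stepB).trans ?_
  refine (oplus_iInf_left (interiorT d f j k)
    (fun L1 : ↥(Subdiv d i j) => oplusChain f L1.1) x).trans ?_
  rw [hIij]

end Interior


/-- if a tuple of elements of `ℒ∨(𝕀)` is closed, then its interior is
again closed (and it is the greatest open tuple below `f`). -/
theorem statement8 (d : ℕ) (hd : 2 ≤ d) (f : Fin d → Fin d → (𝕀 → 𝕀))
    (hjc : TupleJC d f) (hcl : ClosedT d f) :
    ClosedT d (interiorT d f) ∧
    OpenT d (interiorT d f) ∧ TLE d (interiorT d f) f ∧
    ∀ g : Fin d → Fin d → (𝕀 → 𝕀), OpenT d g → TLE d g f → TLE d g (interiorT d f) := by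
  refine ⟨?_, open_interior hjc, fun i j hij x => interior_le_f hjc hij x, ?_⟩
  · intro i j k hij hjk x
    rw [interiorT_apply]
    apply le_iInf fun L => ?_
    obtain ⟨M, hM⟩ := subdiv_shape L.2
    have hL := L.2
    rw [hM] at hL
    rw [hM]
    exact key_closed hjc hcl hjk M i hij hL x
  · intro g hgo hgle i j hij x
    rw [interiorT_apply]
    apply le_iInf fun L => ?_
    obtain ⟨M, hM⟩ := subdiv_shape L.2
    have hL := L.2
    rw [hM] at hL
    rw [hM]
    exact key_great hjc hgo hgle M i hij hL x

end
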